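/- Let D be a domain and S ⊆ D a multiplicative set not containing 0. Then R(S⁻¹D) = R(D)[S], i.e. the reciprocal complement of the localization S⁻¹D equals the subring of Frac(D) generated by R(D) together with the elements of S. -/

import Mathlib

/-!
Every element of `S⁻¹D` is a fraction `d / s`, so the reciprocal of a nonzero one is
`d⁻¹ * s ∈ R(D)[S]`. Conversely `R(D) ⊆ R(S⁻¹D)` because `R` is monotone, and
`s = (s⁻¹)⁻¹` is the reciprocal of an element of `S⁻¹D`.
-/

noncomputable def recip (D : Type*) [CommRing D] [IsDomain D] : Subring (FractionRing D) :=
  Subring.closure {x | ∃ d : D, d ≠ 0 ∧ x = (algebraMap D (FractionRing D) d)⁻¹}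

/-- The reciprocal complement, inside a field `F`, of a subring `A` of `F`: the
subring of `F` generated by the inverses of the nonzero elements of `A`. -/
def recipIn {F : Type*} [Field F] (A : Subring F) : Subring F :=
  Subring.closure {x | ∃ a ∈ A, a ≠ 0 ∧ x = a⁻¹}

section recipIn

variable {K : Type*} [Field K]

theorem inv_mem_recipIn {A : Subring K} {a : K} (ha : a ∈ A) (ha0 : a ≠ 0) :
    a⁻¹ ∈ recipIn A :=
  Subring.subset_closure ⟨a, ha, ha0, rfl⟩

theorem recipIn_mono {A B : Subring K} (hAB : A ≤ B) : recipIn A ≤ recipIn B :=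
  Subring.closure_le.mpr fun _ ⟨_, ha, ha0, hx⟩ => hx ▸ inv_mem_recipIn (hAB ha) ha0

theorem exists_eq_mul_inv_of_mem_closure_union_inv {A : Subring K} {T : Submonoid K}
    (hTA : (T : Set K) ⊆ A) {x : K}
    (hx : x ∈ Subring.closure ((A : Set K) ∪ {y | ∃ t ∈ T, y = t⁻¹})) :
    ∃ a ∈ A, ∃ t ∈ T, t ≠ 0 ∧ x = a * t⁻¹ := by
  induction hx using Subring.closure_induction with
  | mem x hx =>
    rcases hx with ha | ⟨t, ht, rfl⟩
    · exact ⟨x, ha, 1, T.one_mem, one_ne_zero, by simp⟩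
    · by_cases ht0 : t = 0
      · exact ⟨0, A.zero_mem, 1, T.one_mem, one_ne_zero, by simp [ht0]⟩
      · exact ⟨1, A.one_mem, t, ht, ht0, by simp⟩
  | zero => exact ⟨0, A.zero_mem, 1, T.one_mem, one_ne_zero, by simp⟩
  | one => exact ⟨1, A.one_mem, 1, T.one_mem, one_ne_zero, by simp⟩
  | neg x _ ih =>
    obtain ⟨a, ha, t, ht, ht0, rfl⟩ := ih
    exact ⟨-a, A.neg_mem ha, t, ht, ht0, by ring⟩
  | add x y _ _ ihx ihy =>
    obtain ⟨a, ha, t, ht, ht0, rfl⟩ := ihx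
    obtain ⟨b, hb, u, hu, hu0, rfl⟩ := ihy
    refine ⟨a * u + b * t, A.add_mem (A.mul_mem ha (hTA hu)) (A.mul_mem hb (hTA ht)),
      t * u, T.mul_mem ht hu, mul_ne_zero ht0 hu0, ?_⟩
    field_simp
  | mul x y _ _ ihx ihy =>
    obtain ⟨a, ha, t, ht, ht0, rfl⟩ := ihx
    obtain ⟨b, hb, u, hu, hu0, rfl⟩ := ihy
    exact ⟨a * b, A.mul_mem ha hb, t * u, T.mul_mem ht hu, mul_ne_zero ht0 hu0, by
      rw [mul_inv]; ring⟩

theorem recipIn_closure_union_inv {A : Subring K} {T : Submonoid K}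
    (hTA : (T : Set K) ⊆ A) :
    recipIn (Subring.closure ((A : Set K) ∪ {y | ∃ t ∈ T, y = t⁻¹})) =
      Subring.closure ((recipIn A : Set K) ∪ T) := by
  set B := Subring.closure ((A : Set K) ∪ {y | ∃ t ∈ T, y = t⁻¹})
  apply le_antisymm
  · refine Subring.closure_le.mpr ?_
    rintro _ ⟨b, hb, hb0, rfl⟩
    obtain ⟨a, ha, t, ht, -, rfl⟩ := exists_eq_mul_inv_of_mem_closure_union_inv hTA hb
    rw [mul_inv, inv_inv]
    exact Subring.mul_mem _
      (Subring.subset_closure (Or.inl (inv_mem_recipIn ha (left_ne_zero_of_mul hb0))))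
      (Subring.subset_closure (Or.inr ht))
  · refine Subring.closure_le.mpr (Set.union_subset ?_ ?_)
    · exact recipIn_mono fun a ha => Subring.subset_closure (Or.inl ha)
    · intro t ht
      by_cases ht0 : t = 0
      · exact ht0 ▸ (recipIn B).zero_mem
      · rw [← inv_inv t]
        exact inv_mem_recipIn (Subring.subset_closure (Or.inr ⟨t, ht, rfl⟩)) (inv_ne_zero ht0)

end recipIn

theorem recip_eq_recipIn_range (D : Type*) [CommRing D] [IsDomain D] :
    recip D = recipIn (algebraMap D (FractionRing D)).range := by
  simp only [recip, recipIn, RingHom.mem_range, ne_eq]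
  congr 1
  ext x
  constructor
  · rintro ⟨d, hd, rfl⟩
    exact ⟨_, ⟨d, rfl⟩, by simpa using hd, rfl⟩
  · rintro ⟨_, ⟨d, rfl⟩, hd, rfl⟩
    exact ⟨d, by simpa using hd, rfl⟩

theorem stmt_10 (D : Type*) [CommRing D] [IsDomain D] (S : Submonoid D) :
    recipIn (Subring.closure
        (Set.range (algebraMap D (FractionRing D)) ∪
          {x | ∃ s ∈ S, x = (algebraMap D (FractionRing D) s)⁻¹})) =
      Subring.closure
        ((recip D : Set (FractionRing D)) ∪ (algebraMap D (FractionRing D) '' S)) := by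
  set φ := algebraMap D (FractionRing D)
  have hS : (S.map φ : Set (FractionRing D)) ⊆ φ.range := by
    rintro _ ⟨s, -, rfl⟩
    exact ⟨s, rfl⟩
  have hinv : {x | ∃ s ∈ S, x = (φ s)⁻¹} = {x | ∃ t ∈ S.map φ, x = t⁻¹} := by
    ext x
    simp [Submonoid.mem_map]
  rw [← RingHom.coe_range, hinv, recipIn_closure_union_inv hS, recip_eq_recipIn_range,
    Submonoid.coe_map]
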